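/- Let ξ_1, ..., ξ_{r-2} be invertible elements of a commutative ring and let ε_n := E_n(ξ_1, ξ_1^{-1}, ..., ξ_{r-2}, ξ_{r-2}^{-1}) (with ε_n = 0 for n < 0). Then for every n ≥ 0, the n-th elementary symmetric polynomial in the 2r variables -1, -1, 1, 1, -ξ_1, ..., -ξ_{r-2}, -ξ_1^{-1}, ..., -ξ_{r-2}^{-1} equals (-1)^n (ε_n - 2ε_{n-2} + ε_{n-4}). -/

import Mathlib

/-- `E l d`: the `d`-th elementary symmetric polynomial of the list `l`,
with the convention `E l d = 0` for `d < 0` (and automatically `E l d = 0`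
when `d` exceeds the length of `l`, and `E l 0 = 1`). -/
noncomputable def E {R : Type*} [CommRing R] (l : List R) (d : ℤ) : R :=
  if d < 0 then 0 else Multiset.esymm (l : Multiset R) d.toNat

/-!
Both sides only see the multiset of variables. The variables on the left are, up to order,
the negatives of `1, -1, 1, -1, ξ₁, ξ₁⁻¹, …`, so the left side is `(-1)ⁿ` times the elementary
symmetric polynomial of that list, and each pair `1, -1` multiplies the generating function
`∑ εₙ tⁿ` by `1 - t²`; two such pairs give the factor `1 - 2t² + t⁴`.
-/

theorem Multiset.esymm_cons_succ {R : Type*} [CommSemiring R] (a : R) (s : Multiset R) (k : ℕ) :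
    (a ::ₘ s).esymm (k + 1) = s.esymm (k + 1) + a * s.esymm k := by
  simp only [Multiset.esymm, Multiset.powersetCard_cons, Multiset.map_add, Multiset.sum_add,
    Multiset.map_map, Function.comp_def, Multiset.prod_cons, Multiset.sum_map_mul_left]

theorem List.ofFn_append_ofFn_perm_flatten {α : Type*} {k : ℕ} (f g : Fin k → α) :
    (List.ofFn f ++ List.ofFn g).Perm (List.ofFn fun j => [f j, g j]).flatten := by
  induction k with
  | zero => simp
  | succ k ih =>
    simp only [List.ofFn_succ, List.flatten_cons, List.cons_append, List.nil_append]
    exact (List.perm_middle.cons (f 0)).trans (((ih _ _).cons (g 0)).cons (f 0))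

section E

variable {R : Type*} [CommRing R]

theorem E_natCast (l : List R) (n : ℕ) : E l n = (l : Multiset R).esymm n := by
  simp [E]

theorem E_of_neg (l : List R) {d : ℤ} (hd : d < 0) : E l d = 0 := if_pos hd

theorem List.Perm.E_eq {l l' : List R} (h : l.Perm l') (d : ℤ) : E l d = E l' d := by
  simp only [E, Multiset.coe_eq_coe.mpr h]

theorem E_cons (a : R) (l : List R) (d : ℤ) : E (a :: l) d = E l d + a * E l (d - 1) := by
  obtain hd | rfl | hd := lt_trichotomy d 0
  · simp [E_of_neg _ hd, E_of_neg _ (show d - 1 < 0 by omega)]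
  · rw [zero_sub, E_of_neg _ neg_one_lt_zero, mul_zero, add_zero, ← Nat.cast_zero, E_natCast,
      E_natCast]
    simp [Multiset.esymm]
  · obtain ⟨k, rfl⟩ : ∃ k : ℕ, d = k + 1 := ⟨(d - 1).toNat, by omega⟩
    rw [add_sub_cancel_right, ← Nat.cast_succ, E_natCast, E_natCast, E_natCast,
      ← Multiset.cons_coe, Multiset.esymm_cons_succ]

theorem E_cons_cons_neg (a : R) (l : List R) (d : ℤ) :
    E (a :: -a :: l) d = E l d - a ^ 2 * E l (d - 2) := by
  rw [E_cons, E_cons, E_cons, show d - 1 - 1 = d - 2 by ring]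
  ring

theorem E_map_neg (l : List R) (n : ℕ) : E (l.map Neg.neg) n = (-1) ^ n * E l n := by
  rw [E_natCast, E_natCast, ← Multiset.map_coe, Multiset.esymm_neg]

end E

theorem esymm_D_series_Jv_general {R : Type*} [CommRing R] (r : ℕ)
    (ξ : Fin (r - 2) → Rˣ) (n : ℕ) :
    E (-1 :: -1 :: 1 :: 1 ::
        ((List.ofFn fun j => -((ξ j : R))) ++ (List.ofFn fun j => -(((ξ j)⁻¹ : Rˣ) : R))))
        n
      = (-1) ^ n *
        (E ((List.ofFn fun j => [((ξ j : R)), (((ξ j)⁻¹ : Rˣ) : R)]).flatten) n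
          - 2 * E ((List.ofFn fun j => [((ξ j : R)), (((ξ j)⁻¹ : Rˣ) : R)]).flatten) (n - 2)
          + E ((List.ofFn fun j => [((ξ j : R)), (((ξ j)⁻¹ : Rˣ) : R)]).flatten) (n - 4)) := by
  set L := (List.ofFn fun j => [((ξ j : R)), (((ξ j)⁻¹ : Rˣ) : R)]).flatten
  have hL : ((List.ofFn fun j => -((ξ j : R))) ++
      (List.ofFn fun j => -(((ξ j)⁻¹ : Rˣ) : R))).Perm (L.map Neg.neg) := by
    simpa only [L, List.map_flatten, List.map_ofFn, Function.comp_def, List.map_cons,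
      List.map_nil] using
      List.ofFn_append_ofFn_perm_flatten (fun j => -((ξ j : R))) fun j => -(((ξ j)⁻¹ : Rˣ) : R)
  have hperm : (-1 :: -1 :: 1 :: 1 :: ((List.ofFn fun j => -((ξ j : R))) ++
      (List.ofFn fun j => -(((ξ j)⁻¹ : Rˣ) : R)))).Perm ((1 :: -1 :: 1 :: -1 :: L).map Neg.neg) := by
    simp only [List.map_cons, neg_neg]
    exact ((List.Perm.swap _ _ _).cons _).trans (((hL.cons _).cons _).cons _ |>.cons _)
  rw [hperm.E_eq, E_map_neg, E_cons_cons_neg, E_cons_cons_neg, E_cons_cons_neg,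
    show (n : ℤ) - 2 - 2 = n - 4 by ring]
  ring

theorem esymm_D_series_Jv {R : Type*} [CommRing R] (r : ℕ) (hr : 2 ≤ r)
    (ξ : Fin (r - 2) → Rˣ) (n : ℕ) :
    E (-1 :: -1 :: 1 :: 1 ::
        ((List.ofFn fun j => -((ξ j : R))) ++ (List.ofFn fun j => -(((ξ j)⁻¹ : Rˣ) : R))))
        n
      = (-1) ^ n *
        (E ((List.ofFn fun j => [((ξ j : R)), (((ξ j)⁻¹ : Rˣ) : R)]).flatten) n
          - 2 * E ((List.ofFn fun j => [((ξ j : R)), (((ξ j)⁻¹ : Rˣ) : R)]).flatten) (n - 2)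
          + E ((List.ofFn fun j => [((ξ j : R)), (((ξ j)⁻¹ : Rˣ) : R)]).flatten) (n - 4)) :=
  esymm_D_series_Jv_general r ξ n
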